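/- Let D ≥ 4, k real with k > D/2, and p ≥ k. Suppose V : ℂ → ℝ satisfies |V(z)| ≤ K₀|z|^{p+1} for all z ∈ ℂ, with K₀ > 0. Suppose g : (0,∞) → (0,1] and h̃ : (0,∞) → ℂ satisfies |h̃(s)| ≤ (2x/(2k−D)) (1+u)^{-(2k-D)/2}(1+s+u)^{-(D-2)/2} for all s > 0, for fixed u ≥ 0, x ≥ 0. Then there exists C > 0 depending only on D, k, p, K₀ such that for all r > 0: (1/r^{D−3}) ∫₀^r g(s)|V(h̃(s))| s^{D−2} ds ≤ C x^{p+1} / ((1+u)^{(2k−D)(p+1)/2} (1+r+u)^{D−3}). -/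

import Mathlib

/-!
By the decay of `h̃` and `|V z| ≤ K₀ ‖z‖^(p+1)`, the integrand is at most a constant times
`x^(p+1) (1+u)^(-(2k-D)(p+1)/2) s^(D-2) (1+u+s)^(-β)` with `β = (D-2)(p+1)/2`. Since
`s / (1+u+s)` increases in `s` and is at most `1`,
`s^(D-2) (1+u+s)^(-β) ≤ (r/(1+u+r))^(D-3) (1+u+s)^(-(β-(D-2)))` for `s ≤ r`.
As `p > D/2 ≥ 2`, the exponent `β - (D-2)` exceeds `1`, so the last factor has integral at most
`1/(β-(D-2)-1)` over `[0, ∞)`; dividing by `r^(D-3)` leaves the factor `(1+u+r)^(-(D-3))`.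
-/

open MeasureTheory Set

lemma intervalIntegral.integral_mono_on_Ioc_of_nonneg {f g : ℝ → ℝ} {a b : ℝ} (hab : a ≤ b)
    (hg : IntervalIntegrable g volume a b) (hf : ∀ x ∈ Ioc a b, 0 ≤ f x)
    (hfg : ∀ x ∈ Ioc a b, f x ≤ g x) :
    ∫ x in a..b, f x ≤ ∫ x in a..b, g x := by
  rw [intervalIntegral.integral_of_le hab, intervalIntegral.integral_of_le hab]
  exact integral_mono_of_nonneg (ae_restrict_of_forall_mem measurableSet_Ioc hf) hg.1
    (ae_restrict_of_forall_mem measurableSet_Ioc hfg)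

lemma integral_add_rpow_neg_le {a b r : ℝ} (ha : 0 < a) (hb : 1 < b) (hr : 0 ≤ r) :
    ∫ s in (0:ℝ)..r, (a + s) ^ (-b) ≤ a ^ (1 - b) / (b - 1) := by
  have h0 : (0:ℝ) ∉ uIcc a (a + r) := by
    rw [uIcc_of_le (by linarith)]; exact fun h => by linarith [h.1]
  rw [intervalIntegral.integral_comp_add_left (fun t => t ^ (-b)), add_zero,
    integral_rpow (Or.inr ⟨by linarith, h0⟩),
    show -b + 1 = -(b - 1) by ring, div_neg, ← neg_div, neg_sub, show 1 - b = -(b - 1) by ring]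
  have hpos : 0 ≤ (a + r) ^ (-(b - 1)) := by positivity
  gcongr
  linarith

lemma rpow_mul_add_rpow_neg_le {a m β r s : ℝ} (ha : 0 < a) (hm : 1 ≤ m) (hs : 0 ≤ s)
    (hsr : s ≤ r) :
    s ^ m * (a + s) ^ (-β) ≤ (r / (a + r)) ^ (m - 1) * (a + s) ^ (m - β) := by
  have has : 0 < a + s := by linarith
  have hratio : s / (a + s) ≤ r / (a + r) := by
    rw [div_le_div_iff₀ has (by linarith)]; nlinarith
  have hle1 : s / (a + s) ≤ 1 := (div_le_one has).2 (by linarith)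
  calc s ^ m * (a + s) ^ (-β) = (s / (a + s)) ^ m * (a + s) ^ (m - β) := by
        rw [Real.div_rpow hs has.le, div_mul_eq_mul_div, mul_div_assoc, sub_eq_add_neg,
          Real.rpow_add has, mul_div_cancel_left₀ _ (Real.rpow_pos_of_pos has m).ne']
    _ ≤ (s / (a + s)) ^ (m - 1) * (a + s) ^ (m - β) := by
        gcongr ?_ * _
        exact Real.rpow_le_rpow_of_exponent_ge' (by positivity) hle1 (by linarith) (by linarith)
    _ ≤ (r / (a + r)) ^ (m - 1) * (a + s) ^ (m - β) := by
        gcongr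

lemma continuousOn_add_rpow {a : ℝ} (ha : 0 < a) (c : ℝ) :
    ContinuousOn (fun s : ℝ => (a + s) ^ c) (Ici 0) :=
  (continuousOn_const.add continuousOn_id).rpow_const fun s hs =>
    Or.inl (by linarith [mem_Ici.1 hs] : 0 < a + s).ne'

lemma intervalIntegrable_rpow_mul_add_rpow {a m r : ℝ} (ha : 0 < a) (hm : 0 ≤ m) (hr : 0 ≤ r)
    (c : ℝ) : IntervalIntegrable (fun s : ℝ => s ^ m * (a + s) ^ c) volume 0 r :=
  ContinuousOn.intervalIntegrable <| by
    rw [uIcc_of_le hr]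
    exact (continuousOn_id.rpow_const fun _ _ => Or.inr hm).mul
      ((continuousOn_add_rpow ha c).mono Icc_subset_Ici_self)

lemma integral_rpow_mul_add_rpow_neg_le {a m β r : ℝ} (ha : 1 ≤ a) (hm : 1 ≤ m)
    (hβ : m + 1 < β) (hr : 0 ≤ r) :
    ∫ s in (0:ℝ)..r, s ^ m * (a + s) ^ (-β) ≤ r ^ (m - 1) / ((β - m - 1) * (a + r) ^ (m - 1)) := by
  have ha0 : 0 < a := by linarith
  calc ∫ s in (0:ℝ)..r, s ^ m * (a + s) ^ (-β)
      ≤ ∫ s in (0:ℝ)..r, (r / (a + r)) ^ (m - 1) * (a + s) ^ (-(β - m)) := by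
        refine intervalIntegral.integral_mono_on hr ?_ ?_ fun s hs => ?_
        · exact intervalIntegrable_rpow_mul_add_rpow ha0 (by linarith) hr _
        · refine (ContinuousOn.intervalIntegrable ?_).const_mul _
          rw [uIcc_of_le hr]
          exact (continuousOn_add_rpow ha0 _).mono Icc_subset_Ici_self
        · rw [neg_sub]; exact rpow_mul_add_rpow_neg_le ha0 hm hs.1 hs.2
    _ ≤ (r / (a + r)) ^ (m - 1) * (a ^ (1 - (β - m)) / (β - m - 1)) := by
        rw [intervalIntegral.integral_const_mul]
        gcongr
        exact integral_add_rpow_neg_le ha0 (by linarith) hr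
    _ ≤ (r / (a + r)) ^ (m - 1) * (1 / (β - m - 1)) := by
        gcongr
        · linarith
        · exact Real.rpow_le_one_of_one_le_of_nonpos ha (by linarith)
    _ = r ^ (m - 1) / ((β - m - 1) * (a + r) ^ (m - 1)) := by
        rw [Real.div_rpow hr (by linarith), div_mul_div_comm, mul_one,
          mul_comm ((a + r) ^ (m - 1))]

lemma abs_le_of_norm_le_mul_rpow_neg {V : ℂ → ℝ} {K₀ q : ℝ}
    (hV : ∀ z : ℂ, |V z| ≤ K₀ * ‖z‖ ^ q) (hK₀ : 0 ≤ K₀) (hq : 0 ≤ q)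
    {z : ℂ} {A a t γ δ : ℝ} (hA : 0 ≤ A) (ha : 0 ≤ a) (ht : 0 ≤ t)
    (hz : ‖z‖ ≤ A * (a ^ (-γ) * t ^ (-δ))) :
    |V z| ≤ K₀ * A ^ q * a ^ (-(γ * q)) * t ^ (-(δ * q)) := by
  calc |V z| ≤ K₀ * (A * (a ^ (-γ) * t ^ (-δ))) ^ q := (hV z).trans (by gcongr)
    _ = K₀ * A ^ q * a ^ (-(γ * q)) * t ^ (-(δ * q)) := by
        rw [Real.mul_rpow hA (by positivity), Real.mul_rpow (by positivity) (by positivity),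
          ← Real.rpow_mul ha, ← Real.rpow_mul ht, neg_mul, neg_mul]
        ring

lemma one_div_rpow_mul_integral_le {f : ℝ → ℝ} {a m β r M : ℝ} (ha : 1 ≤ a) (hm : 1 ≤ m)
    (hβ : m + 1 < β) (hr : 0 < r) (hM : 0 ≤ M) (hf₀ : ∀ s ∈ Ioc 0 r, 0 ≤ f s)
    (hf : ∀ s ∈ Ioc 0 r, f s ≤ M * (s ^ m * (a + s) ^ (-β))) :
    1 / r ^ (m - 1) * ∫ s in (0:ℝ)..r, f s ≤ M / ((β - m - 1) * (a + r) ^ (m - 1)) := by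
  calc 1 / r ^ (m - 1) * ∫ s in (0:ℝ)..r, f s
      ≤ 1 / r ^ (m - 1) * (M * (r ^ (m - 1) / ((β - m - 1) * (a + r) ^ (m - 1)))) := by
        gcongr
        calc ∫ s in (0:ℝ)..r, f s ≤ ∫ s in (0:ℝ)..r, M * (s ^ m * (a + s) ^ (-β)) :=
              intervalIntegral.integral_mono_on_Ioc_of_nonneg hr.le
                ((intervalIntegrable_rpow_mul_add_rpow (by linarith) (by linarith) hr.le _).const_mul
                  M) hf₀ hf
          _ ≤ M * (r ^ (m - 1) / ((β - m - 1) * (a + r) ^ (m - 1))) := by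
              rw [intervalIntegral.integral_const_mul]
              exact mul_le_mul_of_nonneg_left (integral_rpow_mul_add_rpow_neg_le ha hm hβ hr.le) hM
    _ = M / ((β - m - 1) * (a + r) ^ (m - 1)) := by field_simp

theorem stmt_17 (D : ℕ) (hD : 4 ≤ D) (k p K₀ u x : ℝ) (hk : k > D / 2) (hp : k ≤ p)
    (hK₀ : 0 < K₀) (hu : 0 ≤ u) (hx : 0 ≤ x)
    (V : ℂ → ℝ) (hV : ∀ z : ℂ, |V z| ≤ K₀ * ‖z‖ ^ (p + 1))
    (g : ℝ → ℝ) (hg : ∀ s : ℝ, 0 < s → 0 < g s ∧ g s ≤ 1)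
    (ht : ℝ → ℂ)
    (hht : ∀ s : ℝ, 0 < s →
      ‖ht s‖ ≤ 2 * x / (2 * k - D) *
        ((1 + u) ^ (-((2 * k - D) / 2)) * (1 + s + u) ^ (-(((D : ℝ) - 2) / 2)))) :
    ∃ C : ℝ, 0 < C ∧ ∀ r : ℝ, 0 < r →
      (1 / r ^ ((D : ℝ) - 3)) * ∫ s in (0:ℝ)..r, g s * |V (ht s)| * s ^ ((D : ℝ) - 2)
        ≤ C * x ^ (p + 1) /
            ((1 + u) ^ ((2 * k - D) * (p + 1) / 2) * (1 + r + u) ^ ((D : ℝ) - 3)) := by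
  have hD4 : (4 : ℝ) ≤ D := by exact_mod_cast hD
  have hkD : 0 < 2 * k - D := by linarith
  have hβ : (D - 2 : ℝ) + 1 < (D - 2) / 2 * (p + 1) := by
    nlinarith [mul_pos (by linarith : (0 : ℝ) < D - 2) (by linarith : (0 : ℝ) < p - D / 2),
      mul_nonneg (by linarith : (0 : ℝ) ≤ D) (by linarith : (0 : ℝ) ≤ D - 4)]
  refine ⟨K₀ * (2 / (2 * k - D)) ^ (p + 1) / ((D - 2) / 2 * (p + 1) - (D - 2) - 1),
    div_pos (by positivity) (by linarith), fun r hr => ?_⟩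
  have hbound := one_div_rpow_mul_integral_le (a := 1 + u) (by linarith) (by linarith) hβ hr
    (M := K₀ * (2 * x / (2 * k - D)) ^ (p + 1) * (1 + u) ^ (-((2 * k - D) / 2 * (p + 1))))
    (by positivity) (fun s hs => mul_nonneg (mul_nonneg (hg s hs.1).1.le (abs_nonneg _))
      (Real.rpow_nonneg hs.1.le _)) fun s hs => by
    have hVs := abs_le_of_norm_le_mul_rpow_neg hV hK₀.le (by linarith)
      (div_nonneg (by positivity) hkD.le) (by linarith) (by linarith [hs.1]) (hht s hs.1)
    calc g s * |V (ht s)| * s ^ ((D : ℝ) - 2)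
        ≤ 1 * (K₀ * (2 * x / (2 * k - D)) ^ (p + 1) * (1 + u) ^ (-((2 * k - D) / 2 * (p + 1)))
          * (1 + s + u) ^ (-((D - 2) / 2 * (p + 1)))) * s ^ ((D : ℝ) - 2) :=
          mul_le_mul_of_nonneg_right (mul_le_mul (hg s hs.1).2 hVs (abs_nonneg _) zero_le_one)
            (Real.rpow_nonneg hs.1.le _)
      _ = _ := by rw [add_right_comm]; ring
  rw [show (D : ℝ) - 2 - 1 = D - 3 by ring] at hbound
  refine hbound.trans_eq ?_
  rw [Real.rpow_neg (by linarith), mul_div_right_comm 2 x, Real.mul_rpow (by positivity) hx,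
    add_right_comm 1 u r]
  field_simp
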